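/- arXiv:1712.03947 — 3 statements merged into one kernel-verified Lean document; each statement's English description precedes it below -/
import Mathlib

section
/- For all integers j ≥ l ≥ 1 and every i with 0 ≤ i < d_j, the image of the generalized cyclotomic class D_i^(p^j) under reduction modulo p^l is exactly D_(i mod d_l)^(p^l). -/
/-- The generalized cyclotomic class `D_i^(p^j)` of order `d_j = p^(j-1)·(p-1)/e`
with respect to a primitive root `g`:
`D_i^(p^j) = { g^(d_j·t + i) mod p^j : 0 ≤ t < e }`. -/
def Dclass (p e g j i : ℕ) : Set (ZMod (p ^ j)) :=
  {x | ∃ t < e, x = (g : ZMod (p ^ j)) ^ (p ^ (j - 1) * ((p - 1) / e) * t + i)}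

/-!
A primitive root `g` modulo `p²` stays one modulo every `p ^ l`: `g ^ (p - 1) = 1 + p a` with
`p ∤ a`, and `1 + p a` has order `p ^ (l - 1)` modulo `p ^ l`. So the exponent of `g` modulo `p ^ l`
only matters modulo `d_l e`, and `D_i^(p^l)` is the set of all `g ^ (d_l n + i)` with `n ∈ ℕ`.
Reduction sends `g ^ (d_j n + i)` to the same power, where `d_j = p ^ (j - l) d_l`; as `p ^ (j - l)`
is invertible modulo `e` it can be dropped from `n`, and shifting `n` by `i / d_l` replaces `i` by
`i % d_l`.
-/

open Nat

theorem ZMod.intCast_pow_eq_one_iff {n k : ℕ} {x : ℤ} :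
    (x : ZMod n) ^ k = 1 ↔ (n : ℤ) ∣ x ^ k - 1 := by
  rw [← Int.cast_pow, ← Int.cast_one, ZMod.intCast_eq_intCast_iff_dvd_sub, ← dvd_neg, neg_sub]

theorem Nat.totient_prime_sq {p : ℕ} (hp : p.Prime) : φ (p ^ 2) = p * (p - 1) := by
  simpa using totient_prime_pow_succ hp 1

section PrimitiveRoot

variable {p : ℕ} [hp : Fact p.Prime] {x : ℤ} (hx : orderOf (x : ZMod (p ^ 2)) = φ (p ^ 2))
include hx

theorem mul_sub_one_dvd_of_sq_dvd_pow_sub_one {k : ℕ} (hk : (p : ℤ) ^ 2 ∣ x ^ k - 1) :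
    p * (p - 1) ∣ k := by
  rw [← totient_prime_sq hp.out, ← hx]
  exact orderOf_dvd_of_pow_eq_one (ZMod.intCast_pow_eq_one_iff.mpr (by exact_mod_cast hk))

theorem orderOf_intCast_prime_of_orderOf_sq : orderOf (x : ZMod p) = p - 1 := by
  have hunit : IsUnit (x : ZMod p) := by
    have : IsUnit (x : ZMod (p ^ 2)) :=
      (orderOf_pos_iff.mp (hx ▸ totient_pos.mpr (pow_pos hp.out.pos 2))).isUnit
    simpa using this.map (ZMod.castHom (dvd_pow_self p two_ne_zero) (ZMod p))
  refine dvd_antisymm (ZMod.orderOf_dvd_card_sub_one hunit.ne_zero) ?_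
  set m := orderOf (x : ZMod p)
  have hm : (p : ℤ) ∣ x ^ m - 1 := ZMod.intCast_pow_eq_one_iff.mp (pow_orderOf_eq_one _)
  have hmp : (p : ℤ) ^ 2 ∣ x ^ (m * p) - 1 := by
    simpa [pow_mul, one_pow] using dvd_sub_pow_of_dvd_sub (b := (1 : ℤ)) (by simpa using hm) 1
  have hdvd := mul_sub_one_dvd_of_sq_dvd_pow_sub_one hx hmp
  rw [mul_comm m] at hdvd
  exact Nat.dvd_of_mul_dvd_mul_left hp.out.pos hdvd

theorem orderOf_intCast_prime_pow_of_orderOf_sq (hp2 : p ≠ 2) (n : ℕ) :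
    orderOf (x : ZMod (p ^ (n + 1))) = φ (p ^ (n + 1)) := by
  have hp1 := orderOf_intCast_prime_of_orderOf_sq hx
  have hp_pos : 0 < p - 1 := Nat.sub_pos_of_lt hp.out.one_lt
  have hdvd : p - 1 ∣ orderOf (x : ZMod (p ^ (n + 1))) := by
    simpa [hp1] using orderOf_map_dvd
      (ZMod.castHom (dvd_pow_self p n.succ_ne_zero) (ZMod p)).toMonoidHom x
  obtain ⟨a, ha⟩ : (p : ℤ) ∣ x ^ (p - 1) - 1 :=
    ZMod.intCast_pow_eq_one_iff.mp (hp1 ▸ pow_orderOf_eq_one _)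
  have hpa : ¬ (p : ℤ) ∣ a := by
    rintro ⟨b, rfl⟩
    have h := mul_sub_one_dvd_of_sq_dvd_pow_sub_one hx ⟨b, by rw [ha]; ring⟩
    nth_rw 2 [← one_mul (p - 1)] at h
    exact hp.out.not_dvd_one (Nat.dvd_of_mul_dvd_mul_right hp_pos h)
  have hpow : (x : ZMod (p ^ (n + 1))) ^ (p - 1) = 1 + p * a := by
    rw [← Int.cast_pow, show x ^ (p - 1) = 1 + p * a by linarith]
    push_cast
    rfl
  have hord := ZMod.orderOf_one_add_mul_prime hp.out hp2 a hpa n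
  rw [← hpow, orderOf_pow_of_dvd hp_pos.ne' hdvd, Nat.div_eq_iff_eq_mul_left hp_pos hdvd] at hord
  rw [hord, totient_prime_pow_succ hp.out]

end PrimitiveRoot

section PowRange

variable {M : Type*} [Monoid M] {x : M} {d e : ℕ} (hx : orderOf x = d * e)
include hx

theorem pow_mul_add_eq_of_modEq {m n : ℕ} (h : m ≡ n [MOD e]) (i : ℕ) :
    x ^ (d * m + i) = x ^ (d * n + i) := by
  rw [← pow_mod_orderOf, ← pow_mod_orderOf x (d * n + i), hx]
  exact congrArg (x ^ ·) ((h.mul_left' d).add_right i)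

theorem range_pow_mul_add_eq_of_coprime {c : ℕ} (hc : c.Coprime e) (he : e ≠ 0) (i : ℕ) :
    Set.range (fun n ↦ x ^ (c * d * n + i)) = Set.range (fun n ↦ x ^ (d * n + i)) := by
  refine subset_antisymm ?_ ?_
  · rintro _ ⟨n, rfl⟩
    exact ⟨c * n, by ring_nf⟩
  · rintro _ ⟨s, rfl⟩
    obtain ⟨n, -, hn⟩ := Nat.exists_mul_mod_eq_of_coprime s hc he
    refine ⟨n, ?_⟩
    dsimp only
    rw [mul_comm c d, mul_assoc]
    exact pow_mul_add_eq_of_modEq hx hn i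

theorem range_pow_mul_add_eq_mod (he : e ≠ 0) (i : ℕ) :
    Set.range (fun n ↦ x ^ (d * n + i)) = Set.range (fun n ↦ x ^ (d * n + i % d)) := by
  have hi (n : ℕ) : d * n + i = d * (n + i / d) + i % d := by
    rw [mul_add, add_assoc, Nat.div_add_mod]
  refine subset_antisymm ?_ ?_
  · rintro _ ⟨n, rfl⟩
    exact ⟨n + i / d, by simp only [hi]⟩
  · rintro _ ⟨s, rfl⟩
    -- `(e - 1) * (i / d) + i / d ≡ 0 [MOD e]`
    refine ⟨s + (e - 1) * (i / d), ?_⟩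
    dsimp only
    rw [hi]
    apply pow_mul_add_eq_of_modEq hx
    rw [add_assoc, ← add_one_mul, Nat.sub_one_add_one he]
    exact Nat.add_mul_mod_self_left s e (i / d)

end PowRange

theorem Dclass_eq_range {p e g j i : ℕ} (he : e ≠ 0)
    (hg : orderOf (g : ZMod (p ^ j)) = p ^ (j - 1) * ((p - 1) / e) * e) :
    Dclass p e g j i =
      Set.range fun n ↦ (g : ZMod (p ^ j)) ^ (p ^ (j - 1) * ((p - 1) / e) * n + i) := by
  refine subset_antisymm ?_ ?_
  · rintro _ ⟨t, -, rfl⟩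
    exact ⟨t, rfl⟩
  · rintro _ ⟨n, rfl⟩
    exact ⟨n % e, Nat.mod_lt n (Nat.pos_of_ne_zero he),
      pow_mul_add_eq_of_modEq hg (Nat.mod_modEq n e).symm i⟩

theorem Dclass_reduction_general
    (p : ℕ) (hp : p.Prime) (hodd : Odd p)
    (e : ℕ) (he : 0 < e) (hef : e ∣ p - 1)
    (g : ℕ) (hg : orderOf (g : ZMod (p ^ 2)) = Nat.totient (p ^ 2))
    (j l : ℕ) (hl : 1 ≤ l) (hlj : l ≤ j)
    (i : ℕ) :
    (ZMod.castHom (pow_dvd_pow p hlj) (ZMod (p ^ l))) '' Dclass p e g j i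
      = Dclass p e g l (i % (p ^ (l - 1) * ((p - 1) / e))) := by
  have := Fact.mk hp
  have hp2 : p ≠ 2 := by
    rintro rfl
    norm_num at hodd
  have hord (k : ℕ) (hk : 1 ≤ k) :
      orderOf (g : ZMod (p ^ k)) = p ^ (k - 1) * ((p - 1) / e) * e := by
    obtain ⟨n, rfl⟩ := Nat.exists_eq_add_of_le' hk
    rw [← Int.cast_natCast, orderOf_intCast_prime_pow_of_orderOf_sq (by simpa using hg) hp2,
      totient_prime_pow_succ hp, mul_assoc, Nat.div_mul_cancel hef, Nat.add_sub_cancel]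
  have hdj : p ^ (j - 1) * ((p - 1) / e) = p ^ (j - l) * (p ^ (l - 1) * ((p - 1) / e)) := by
    rw [← mul_assoc, ← pow_add]
    congr 2
    omega
  have hcop : (p ^ (j - l)).Coprime e :=
    (((Nat.coprime_self_sub_right hp.one_lt.le).mpr (Nat.coprime_one_right p)).coprime_dvd_right
      hef).pow_left _
  rw [Dclass_eq_range he.ne' (hord j (hl.trans hlj)), Dclass_eq_range he.ne' (hord l hl),
    ← Set.range_comp]
  simp only [Function.comp_def, map_pow, map_natCast, hdj]
  rw [range_pow_mul_add_eq_of_coprime (hord l hl) hcop he.ne',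
    range_pow_mul_add_eq_mod (hord l hl) he.ne']

/-- For `j ≥ l ≥ 1` and `0 ≤ i < d_j`, the image of `D_i^(p^j)` under
reduction modulo `p^l` is exactly `D_(i mod d_l)^(p^l)`. -/
theorem Dclass_reduction
    (p : ℕ) (hp : p.Prime) (hodd : Odd p)
    (e : ℕ) (he : 0 < e) (hef : e ∣ p - 1)
    (g : ℕ) (hg : orderOf (g : ZMod (p ^ 2)) = Nat.totient (p ^ 2))
    (j l : ℕ) (hl : 1 ≤ l) (hlj : l ≤ j)
    (i : ℕ) (hi : i < p ^ (j - 1) * ((p - 1) / e)) :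
    (ZMod.castHom (pow_dvd_pow p hlj) (ZMod (p ^ l))) '' Dclass p e g j i
      = Dclass p e g l (i % (p ^ (l - 1) * ((p - 1) / e))) :=
  Dclass_reduction_general p hp hodd e he hef g hg j l hl hlj i
end

section
/- Assume f is even. For every m ≥ 1 and every integer b, the set C₁^(p^m) = ⋃_{j=1}^{m} ⋃_{i=0}^{d_j/2−1} p^(m−j)·D_((i+b) mod d_j)^(p^j) ∪ {0} ⊆ ℤ/p^mℤ has cardinality (p^m + 1)/2, and its complement C₀^(p^m) = ⋃_{j=1}^{m} ⋃_{i=d_j/2}^{d_j−1} p^(m−j)·D_((i+b) mod d_j)^(p^j) satisfies ℤ/p^mℤ = C₀^(p^m) ∪ C₁^(p^m) as a disjoint union. -/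
/-- `C₁^(p^m) = ⋃_{j=1}^{m} ⋃_{i=0}^{d_j/2-1} p^(m-j)·D_((i+b) mod d_j)^(p^j) ∪ {0}`,
where `p^(m-j)·D = { p^(m-j)·x mod p^m : x ∈ D }` (representatives `x ∈ [0, p^j)`). -/
def C1set (p e g m b : ℕ) : Set (ZMod (p ^ m)) :=
  {0} ∪ ⋃ j ∈ Set.Icc 1 m, ⋃ i ∈ Set.Iio (p ^ (j - 1) * ((p - 1) / e) / 2),
    (fun x : ZMod (p ^ j) => (p : ZMod (p ^ m)) ^ (m - j) * (x.val : ZMod (p ^ m))) ''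
      Dclass p e g j ((i + b) % (p ^ (j - 1) * ((p - 1) / e)))

/-- `C₀^(p^m) = ⋃_{j=1}^{m} ⋃_{i=d_j/2}^{d_j-1} p^(m-j)·D_((i+b) mod d_j)^(p^j)`. -/
def C0set (p e g m b : ℕ) : Set (ZMod (p ^ m)) :=
  ⋃ j ∈ Set.Icc 1 m,
    ⋃ i ∈ Set.Ico (p ^ (j - 1) * ((p - 1) / e) / 2) (p ^ (j - 1) * ((p - 1) / e)),
    (fun x : ZMod (p ^ j) => (p : ZMod (p ^ m)) ^ (m - j) * (x.val : ZMod (p ^ m))) ''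
      Dclass p e g j ((i + b) % (p ^ (j - 1) * ((p - 1) / e)))

/-!
Every nonzero residue modulo `p ^ m` is uniquely `p ^ (m - j) * u` with `1 ≤ j ≤ m` and `u` a
unit modulo `p ^ j`. A primitive root modulo `p ^ 2` generates the units modulo every `p ^ j`
(its `(p - 1)`-st power is `1 + p a` with `p ∤ a`), so the units modulo `p ^ j` split into the
`d_j` classes `D_i`, each of size `e`. Hence the nonzero residues are partitioned into blocks of
size `e` indexed by pairs `(j, i)` with `i < d_j`. `C₁` takes `0` and the lower half of the
indices at each level, `C₀` the upper half; as every `d_j` is even, both halves consist of equally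
many blocks, so `|C₁| = |C₀| + 1` and `|C₀| + |C₁| = p ^ m`.
-/

open Set

section CyclotomicClass

variable {M : Type*} [Monoid M] {x : M} {d e i : ℕ}

def cyclotomicClass (x : M) (d e i : ℕ) : Set M :=
  {y | ∃ t < e, y = x ^ (d * t + i)}

theorem pow_mem_cyclotomicClass_iff (hx : orderOf x = d * e) (he : 0 < e) (hi : i < d) (n : ℕ) :
    x ^ n ∈ cyclotomicClass x d e i ↔ n % d = i := by
  have hde : 0 < d * e := Nat.mul_pos (by omega) he
  have hfin : IsOfFinOrder x := orderOf_pos_iff.mp (hx ▸ hde)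
  constructor
  · rintro ⟨t, -, ht⟩
    rw [hfin.pow_eq_pow_iff_modEq, hx] at ht
    have := ht.of_mul_right e
    rwa [Nat.ModEq, Nat.mul_add_mod, Nat.mod_eq_of_lt hi] at this
  · rintro rfl
    refine ⟨n % (d * e) / d, Nat.div_lt_of_lt_mul (Nat.mod_lt _ hde), ?_⟩
    rw [← Nat.mod_mod_of_dvd n (dvd_mul_right d e), Nat.div_add_mod, ← hx, pow_mod_orderOf]

theorem eq_of_mem_cyclotomicClass (hx : orderOf x = d * e) (he : 0 < e) {i' : ℕ}
    (hi : i < d) (hi' : i' < d) {y : M} (h : y ∈ cyclotomicClass x d e i)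
    (h' : y ∈ cyclotomicClass x d e i') : i = i' := by
  obtain ⟨t, -, rfl⟩ := h
  rwa [pow_mem_cyclotomicClass_iff hx he hi', Nat.mul_add_mod, Nat.mod_eq_of_lt hi] at h'

theorem ncard_cyclotomicClass (hx : orderOf x = d * e) (hd : 0 < d) :
    (cyclotomicClass x d e i).ncard = e := by
  have himage : cyclotomicClass x d e i = (fun t => x ^ (d * t + i)) '' ↑(Finset.range e) := by
    ext y
    simp [cyclotomicClass, eq_comm]
  rw [himage, InjOn.ncard_image, ncard_coe_finset, Finset.card_range]
  intro t ht t' ht' h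
  simp only [Finset.coe_range, mem_Iio] at ht ht' h
  have hfin : IsOfFinOrder x := orderOf_pos_iff.mp (hx ▸ Nat.mul_pos hd (by omega))
  rw [hfin.pow_eq_pow_iff_modEq, hx] at h
  exact (Nat.ModEq.mul_left_cancel' hd.ne' (h.add_right_cancel' i)).eq_of_lt_of_lt ht ht'

theorem isUnit_of_mem_cyclotomicClass (hx : orderOf x = d * e) (hd : 0 < d) {y : M}
    (hy : y ∈ cyclotomicClass x d e i) : IsUnit y := by
  obtain ⟨t, ht, rfl⟩ := hy
  exact (orderOf_pos_iff.mp (hx ▸ Nat.mul_pos hd (by omega))).isUnit.pow _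

end CyclotomicClass

theorem exists_pow_eq_of_orderOf_eq_card_units {M : Type*} [Monoid M] [Finite Mˣ] {x y : M}
    (hx : orderOf x = Nat.card Mˣ) (hy : IsUnit y) : ∃ n, x ^ n = y := by
  have hxu : IsUnit x := (orderOf_pos_iff.mp (hx ▸ Nat.card_pos)).isUnit
  have htop : Subgroup.zpowers hxu.unit = ⊤ :=
    Subgroup.eq_top_of_card_eq _ (by rw [Nat.card_zpowers, ← orderOf_units, hxu.unit_spec, hx])
  obtain ⟨n, hn⟩ := mem_powers_iff_mem_zpowers.mpr (htop ▸ Subgroup.mem_top hy.unit)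
  exact ⟨n, by simpa using congrArg Units.val hn⟩

theorem natCast_pow_eq_one_iff_dvd (n g k : ℕ) :
    (g : ZMod n) ^ k = 1 ↔ (n : ℤ) ∣ (g : ℤ) ^ k - 1 := by
  rw [← ZMod.intCast_zmod_eq_zero_iff_dvd]
  push_cast
  rw [sub_eq_zero]

section PrimitiveRoot

variable {p g : ℕ} [hp : Fact p.Prime]

theorem orderOf_natCast_zmod_prime (hg : orderOf (g : ZMod (p ^ 2)) = Nat.totient (p ^ 2)) :
    orderOf (g : ZMod p) = p - 1 := by
  have hunit : IsUnit (g : ZMod p) := by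
    have : IsUnit (g : ZMod (p ^ 2)) :=
      (orderOf_pos_iff.mp (hg ▸ Nat.totient_pos.mpr (pow_pos hp.out.pos 2))).isUnit
    simpa using this.map (ZMod.castHom (dvd_pow_self p two_ne_zero) (ZMod p))
  refine Nat.dvd_antisymm
    (orderOf_dvd_of_pow_eq_one (ZMod.pow_card_sub_one_eq_one hunit.ne_zero)) ?_
  -- a power of `g` that is `1` mod `p` becomes `1` mod `p²` when raised to the `p`-th power
  have hsq : (g : ZMod (p ^ 2)) ^ (orderOf (g : ZMod p) * p) = 1 := by
    have h := (natCast_pow_eq_one_iff_dvd _ _ _).mp (pow_orderOf_eq_one (g : ZMod p))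
    rw [natCast_pow_eq_one_iff_dvd, pow_mul]
    simpa using dvd_sub_pow_of_dvd_sub h 1
  have hdvd := orderOf_dvd_of_pow_eq_one hsq
  rw [hg, Nat.totient_prime_pow_succ hp.out 1, pow_one, mul_comm] at hdvd
  exact Nat.dvd_of_mul_dvd_mul_right hp.out.pos hdvd

theorem orderOf_natCast_zmod_prime_pow (hp2 : p ≠ 2)
    (hg : orderOf (g : ZMod (p ^ 2)) = Nat.totient (p ^ 2)) {j : ℕ} (hj : j ≠ 0) :
    orderOf (g : ZMod (p ^ j)) = Nat.totient (p ^ j) := by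
  obtain ⟨k, rfl⟩ := Nat.exists_eq_succ_of_ne_zero hj
  have hp1 : 0 < p - 1 := by have := hp.out.two_le; omega
  obtain ⟨a, ha⟩ : (p : ℤ) ∣ (g : ℤ) ^ (p - 1) - 1 := by
    rw [← natCast_pow_eq_one_iff_dvd, ← orderOf_natCast_zmod_prime hg]
    exact pow_orderOf_eq_one _
  have hpa : ¬ (p : ℤ) ∣ a := by
    rintro ⟨c, rfl⟩
    have h : (g : ZMod (p ^ 2)) ^ (p - 1) = 1 := by
      rw [natCast_pow_eq_one_iff_dvd, ha]
      exact ⟨c, by push_cast; ring⟩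
    have := Nat.le_of_dvd hp1 (hg ▸ orderOf_dvd_of_pow_eq_one h)
    rw [Nat.totient_prime_pow_succ hp.out 1, pow_one] at this
    nlinarith [hp.out.two_le]
  have hpow : orderOf ((g : ZMod (p ^ (k + 1))) ^ (p - 1)) = p ^ k := by
    have h := congrArg (Int.cast : ℤ → ZMod (p ^ (k + 1))) (sub_eq_iff_eq_add'.mp ha)
    push_cast at h
    rw [h]
    exact ZMod.orderOf_one_add_mul_prime hp.out hp2 a hpa k
  have hdvd : p - 1 ∣ orderOf (g : ZMod (p ^ (k + 1))) := by
    rw [← orderOf_natCast_zmod_prime hg]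
    simpa using orderOf_map_dvd
      (ZMod.castHom (dvd_pow_self p k.succ_ne_zero) (ZMod p)).toMonoidHom (g : ZMod (p ^ (k + 1)))
  rw [orderOf_pow' _ hp1.ne', Nat.gcd_eq_right hdvd] at hpow
  rw [Nat.totient_prime_pow_succ hp.out, ← hpow, Nat.div_mul_cancel hdvd]

end PrimitiveRoot

section LevelEmbed

variable {p m j : ℕ} [hp : Fact p.Prime]

def levelEmbed (p m j : ℕ) (x : ZMod (p ^ j)) : ZMod (p ^ m) :=
  (p : ZMod (p ^ m)) ^ (m - j) * (x.val : ZMod (p ^ m))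

theorem val_levelEmbed (hjm : j ≤ m) (x : ZMod (p ^ j)) :
    (levelEmbed p m j x).val = p ^ (m - j) * x.val := by
  have hlt : p ^ (m - j) * x.val < p ^ m := by
    calc p ^ (m - j) * x.val < p ^ (m - j) * p ^ j :=
          Nat.mul_lt_mul_of_pos_left (ZMod.val_lt x) (pow_pos hp.out.pos _)
      _ = p ^ m := by rw [← pow_add, Nat.sub_add_cancel hjm]
  rw [levelEmbed, ← ZMod.val_cast_of_lt hlt]
  push_cast
  rfl

theorem levelEmbed_injective (hjm : j ≤ m) : Function.Injective (levelEmbed p m j) := by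
  intro x y h
  have hval := congrArg ZMod.val h
  rw [val_levelEmbed hjm, val_levelEmbed hjm] at hval
  exact ZMod.val_injective _ (Nat.eq_of_mul_eq_mul_left (pow_pos hp.out.pos _) hval)

theorem isUnit_iff_not_dvd_val (hj : j ≠ 0) (x : ZMod (p ^ j)) : IsUnit x ↔ ¬ p ∣ x.val := by
  conv_lhs => rw [← ZMod.natCast_zmod_val x]
  rw [ZMod.isUnit_iff_coprime, Nat.coprime_pow_right_iff (Nat.pos_of_ne_zero hj),
    Nat.coprime_comm, hp.out.coprime_iff_not_dvd]

theorem padicValNat_val_levelEmbed (hj : j ≠ 0) (hjm : j ≤ m) {x : ZMod (p ^ j)}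
    (hx : IsUnit x) : padicValNat p (levelEmbed p m j x).val = m - j := by
  have hndvd := (isUnit_iff_not_dvd_val hj x).mp hx
  have hx0 : x.val ≠ 0 := fun h => hndvd (h ▸ dvd_zero p)
  rw [val_levelEmbed hjm, padicValNat.mul (pow_ne_zero _ hp.out.ne_zero) hx0,
    padicValNat.prime_pow, padicValNat.eq_zero_of_not_dvd hndvd, add_zero]

theorem levelEmbed_ne_zero (hj : j ≠ 0) (hjm : j ≤ m) {x : ZMod (p ^ j)} (hx : IsUnit x) :
    levelEmbed p m j x ≠ 0 := by
  intro h
  have hndvd := (isUnit_iff_not_dvd_val hj x).mp hx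
  have hval := congrArg ZMod.val h
  rw [val_levelEmbed hjm, ZMod.val_zero] at hval
  exact hndvd ((mul_eq_zero.mp hval).resolve_left (pow_ne_zero _ hp.out.ne_zero) ▸ dvd_zero p)

theorem eq_of_levelEmbed_eq {j' : ℕ} (hj : j ≠ 0) (hjm : j ≤ m) (hj' : j' ≠ 0) (hjm' : j' ≤ m)
    {x : ZMod (p ^ j)} {y : ZMod (p ^ j')} (hx : IsUnit x) (hy : IsUnit y)
    (h : levelEmbed p m j x = levelEmbed p m j' y) : j = j' := by
  have := congrArg (fun c : ZMod (p ^ m) => padicValNat p c.val) h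
  simp only [padicValNat_val_levelEmbed hj hjm hx, padicValNat_val_levelEmbed hj' hjm' hy]
    at this
  omega

theorem exists_levelEmbed_eq {c : ZMod (p ^ m)} (hc : c ≠ 0) :
    ∃ j ∈ Icc 1 m, ∃ x : ZMod (p ^ j), IsUnit x ∧ levelEmbed p m j x = c := by
  have hc0 : c.val ≠ 0 := (ZMod.val_ne_zero c).mpr hc
  obtain ⟨v, u, hu, hcu⟩ := Nat.exists_eq_pow_mul_and_not_dvd hc0 p hp.out.ne_one
  have hu0 : 0 < u := Nat.pos_of_ne_zero (by rintro rfl; exact hu (dvd_zero p))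
  have hvm : v < m := by
    have : p ^ v < p ^ m := (Nat.le_mul_of_pos_right _ hu0).trans_lt (hcu ▸ ZMod.val_lt c)
    exact (Nat.pow_lt_pow_iff_right hp.out.one_lt).mp this
  have hum : u < p ^ (m - v) := by
    refine Nat.lt_of_mul_lt_mul_left (a := p ^ v) ?_
    rw [← pow_add, Nat.add_sub_cancel' hvm.le, ← hcu]
    exact ZMod.val_lt c
  refine ⟨m - v, ⟨by omega, by omega⟩, u, ?_, ?_⟩
  · rwa [isUnit_iff_not_dvd_val (by omega), ZMod.val_cast_of_lt hum]
  · apply ZMod.val_injective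
    rw [val_levelEmbed (by omega), ZMod.val_cast_of_lt hum, Nat.sub_sub_self hvm.le, ← hcu]

end LevelEmbed

theorem Set.ncard_biUnion_of_ncard_eq {ι α : Type*} [Finite α] {t : Set ι} {s : ι → Set α}
    {e : ℕ} (ht : t.Finite) (hdisj : t.PairwiseDisjoint s) (hcard : ∀ i ∈ t, (s i).ncard = e) :
    (⋃ i ∈ t, s i).ncard = t.ncard * e := by
  rw [ht.ncard_biUnion (fun i _ => toFinite (s i)) hdisj, finsum_mem_congr rfl hcard,
    finsum_mem_eq_finite_toFinset_sum _ ht, Finset.sum_const, smul_eq_mul,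
    ncard_eq_toFinset_card t ht]

structure IsBlockPartition {α : Type*} (z : α) (J : Set ℕ) (d : ℕ → ℕ) (S : ℕ → ℕ → Set α)
    (e : ℕ) : Prop where
  exists_mem : ∀ x ≠ z, ∃ j ∈ J, ∃ i < d j, x ∈ S j i
  not_mem : ∀ j ∈ J, ∀ i < d j, z ∉ S j i
  eq_of_mem : ∀ {x j i j' i'}, j ∈ J → i < d j → j' ∈ J → i' < d j' →
    x ∈ S j i → x ∈ S j' i' → j = j' ∧ i = i'
  ncard_eq : ∀ j ∈ J, ∀ i < d j, (S j i).ncard = e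

namespace IsBlockPartition

variable {α : Type*} {z : α} {J : Set ℕ} {d : ℕ → ℕ} {S : ℕ → ℕ → Set α} {e : ℕ}
  (h : IsBlockPartition z J d S e)
include h

theorem union_eq_univ :
    (⋃ j ∈ J, ⋃ i ∈ Ico (d j / 2) (d j), S j i) ∪
      ({z} ∪ ⋃ j ∈ J, ⋃ i ∈ Iio (d j / 2), S j i) = univ := by
  refine eq_univ_of_forall fun x => ?_
  rcases eq_or_ne x z with rfl | hx
  · simp
  obtain ⟨j, hj, i, hi, hxS⟩ := h.exists_mem x hx
  rcases lt_or_ge i (d j / 2) with hlow | hhigh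
  · exact Or.inr (Or.inr (mem_biUnion hj (mem_biUnion hlow hxS)))
  · exact Or.inl (mem_biUnion hj (mem_biUnion ⟨hhigh, hi⟩ hxS))

theorem disjoint :
    Disjoint (⋃ j ∈ J, ⋃ i ∈ Ico (d j / 2) (d j), S j i)
      ({z} ∪ ⋃ j ∈ J, ⋃ i ∈ Iio (d j / 2), S j i) := by
  rw [Set.disjoint_left]
  intro x hU hL
  simp only [mem_iUnion, mem_union, mem_singleton_iff, mem_Ico, mem_Iio, exists_prop] at hU hL
  obtain ⟨j, hj, i, ⟨hi₁, hi₂⟩, hx⟩ := hU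
  rcases hL with rfl | ⟨j', hj', i', hi', hx'⟩
  · exact h.not_mem j hj i hi₂ hx
  · obtain ⟨rfl, rfl⟩ := h.eq_of_mem hj hi₂ hj' (by omega) hx hx'
    omega

theorem ncard_biUnion_biUnion [Finite α] (hJ : J.Finite) {I : ℕ → Set ℕ}
    (hI : ∀ j ∈ J, I j ⊆ Iio (d j)) :
    (⋃ j ∈ J, ⋃ i ∈ I j, S j i).ncard = {q : ℕ × ℕ | q.1 ∈ J ∧ q.2 ∈ I q.1}.ncard * e := by
  have hunion : (⋃ j ∈ J, ⋃ i ∈ I j, S j i) =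
      ⋃ q ∈ {q : ℕ × ℕ | q.1 ∈ J ∧ q.2 ∈ I q.1}, S q.1 q.2 := by
    ext x
    simp only [mem_iUnion, exists_prop, Prod.exists]
    exact ⟨fun ⟨j, hj, i, hi, hx⟩ => ⟨j, i, ⟨hj, hi⟩, hx⟩,
      fun ⟨j, i, ⟨hj, hi⟩, hx⟩ => ⟨j, hj, i, hi, hx⟩⟩
  rw [hunion]
  refine ncard_biUnion_of_ncard_eq ?_ ?_ fun q hq => h.ncard_eq _ hq.1 _ (hI _ hq.1 hq.2)
  · refine (hJ.biUnion fun j _ => (finite_singleton j).prod (finite_Iio (d j))).subset ?_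
    rintro ⟨j, i⟩ ⟨hj, hi⟩
    exact mem_biUnion hj ⟨rfl, hI j hj hi⟩
  · rintro ⟨j, i⟩ ⟨hj, hi⟩ ⟨j', i'⟩ ⟨hj', hi'⟩ hne
    refine Set.disjoint_left.mpr fun x hx hx' => hne ?_
    obtain ⟨rfl, rfl⟩ := h.eq_of_mem hj (hI j hj hi) hj' (hI j' hj' hi') hx hx'
    rfl

theorem ncard_lowerHalf [Finite α] (hJ : J.Finite) (heven : ∀ j ∈ J, Even (d j)) :
    ({z} ∪ ⋃ j ∈ J, ⋃ i ∈ Iio (d j / 2), S j i).ncard = (Nat.card α + 1) / 2 := by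
  have hhalf : ∀ j ∈ J, d j / 2 + d j / 2 = d j := fun j hj => by
    have := Nat.even_iff.mp (heven j hj); omega
  set P := {q : ℕ × ℕ | q.1 ∈ J ∧ q.2 ∈ Iio (d q.1 / 2)}
  set Q := {q : ℕ × ℕ | q.1 ∈ J ∧ q.2 ∈ Ico (d q.1 / 2) (d q.1)}
  have hlow : (⋃ j ∈ J, ⋃ i ∈ Iio (d j / 2), S j i).ncard = P.ncard * e :=
    h.ncard_biUnion_biUnion hJ fun j _ i (hi : i < d j / 2) => show i < d j by omega
  have hhigh : (⋃ j ∈ J, ⋃ i ∈ Ico (d j / 2) (d j), S j i).ncard = Q.ncard * e :=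
    h.ncard_biUnion_biUnion hJ fun j _ i hi => hi.2
  -- shifting the class index by `d j / 2` matches the lower indices with the upper ones
  have hPQ : P.ncard = Q.ncard := by
    refine ncard_congr (fun q _ => (q.1, q.2 + d q.1 / 2)) ?_ ?_ ?_
    · rintro ⟨j, i⟩ ⟨hj, hi : i < d j / 2⟩
      have := hhalf j hj
      exact ⟨hj, show d j / 2 ≤ i + d j / 2 by omega, show i + d j / 2 < d j by omega⟩
    · rintro ⟨j, i⟩ ⟨j', i'⟩ - - hq
      simp only [Prod.mk.injEq] at hq ⊢
      obtain ⟨rfl, hi⟩ := hq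
      omega
    · rintro ⟨j, i⟩ ⟨hj, hi₁ : d j / 2 ≤ i, hi₂ : i < d j⟩
      have := hhalf j hj
      exact ⟨(j, i - d j / 2), ⟨hj, show i - d j / 2 < d j / 2 by omega⟩,
        Prod.ext rfl (show i - d j / 2 + d j / 2 = i by omega)⟩
  have hz : z ∉ ⋃ j ∈ J, ⋃ i ∈ Iio (d j / 2), S j i := by
    simp only [mem_iUnion, mem_Iio, exists_prop, not_exists, not_and]
    exact fun j hj i hi => h.not_mem j hj i (by have := hhalf j hj; omega)
  have htotal := congrArg ncard h.union_eq_univ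
  rw [ncard_union_eq h.disjoint, ncard_univ, singleton_union, ncard_insert_of_notMem hz, hlow,
    hhigh, hPQ] at htotal
  rw [singleton_union, ncard_insert_of_notMem hz, hlow, hPQ]
  omega

end IsBlockPartition

theorem exists_add_mod_eq {b c d : ℕ} (hc : c < d) : ∃ i < d, (i + b) % d = c := by
  have hb : b % d < d := Nat.mod_lt _ (by omega)
  refine ⟨(c + (d - b % d)) % d, Nat.mod_lt _ (by omega), ?_⟩
  rw [Nat.mod_add_mod, ← Nat.add_mod_mod, show c + (d - b % d) + b % d = c + d by omega,
    Nat.add_mod_right, Nat.mod_eq_of_lt hc]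

theorem eq_of_add_mod_eq {b d i i' : ℕ} (hi : i < d) (hi' : i' < d)
    (h : (i + b) % d = (i' + b) % d) : i = i' :=
  (Nat.ModEq.add_right_cancel' b h).eq_of_lt_of_lt hi hi'

def cyclotomicOrder (p e j : ℕ) : ℕ := p ^ (j - 1) * ((p - 1) / e)

theorem Dclass_eq_cyclotomicClass (p e g j i : ℕ) :
    Dclass p e g j i = cyclotomicClass (g : ZMod (p ^ j)) (cyclotomicOrder p e j) e i :=
  rfl

section Cyclotomy

variable {p e g : ℕ} [hp : Fact p.Prime]

theorem cyclotomicOrder_pos (he : 0 < e) (hef : e ∣ p - 1) (j : ℕ) :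
    0 < cyclotomicOrder p e j :=
  Nat.mul_pos (pow_pos hp.out.pos _)
    (Nat.div_pos (Nat.le_of_dvd (by have := hp.out.two_le; omega) hef) he)

theorem orderOf_eq_cyclotomicOrder_mul (hp2 : p ≠ 2) (hef : e ∣ p - 1)
    (hg : orderOf (g : ZMod (p ^ 2)) = Nat.totient (p ^ 2)) {j : ℕ} (hj : j ≠ 0) :
    orderOf (g : ZMod (p ^ j)) = cyclotomicOrder p e j * e := by
  rw [orderOf_natCast_zmod_prime_pow hp2 hg hj, Nat.totient_prime_pow hp.out (by omega),
    cyclotomicOrder, mul_assoc, Nat.div_mul_cancel hef]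

theorem isBlockPartition_levelEmbed_Dclass (hp2 : p ≠ 2) (he : 0 < e) (hef : e ∣ p - 1)
    (hg : orderOf (g : ZMod (p ^ 2)) = Nat.totient (p ^ 2)) (m b : ℕ) :
    IsBlockPartition (0 : ZMod (p ^ m)) (Icc 1 m) (cyclotomicOrder p e)
      (fun j i => levelEmbed p m j '' Dclass p e g j ((i + b) % cyclotomicOrder p e j)) e := by
  have hd := cyclotomicOrder_pos (p := p) he hef
  have hord : ∀ {j}, j ∈ Icc 1 m → orderOf (g : ZMod (p ^ j)) = cyclotomicOrder p e j * e :=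
    fun hj => orderOf_eq_cyclotomicOrder_mul hp2 hef hg (by have := hj.1; omega)
  simp only [Dclass_eq_cyclotomicClass]
  refine ⟨fun x hx => ?_, fun j hj i _ => ?_, fun {x j i j' i'} hj hi hj' hi' hx hx' => ?_,
    fun j hj i _ => ?_⟩
  · obtain ⟨j, hj, y, hy, rfl⟩ := exists_levelEmbed_eq hx
    obtain ⟨n, rfl⟩ := exists_pow_eq_of_orderOf_eq_card_units (x := (g : ZMod (p ^ j)))
      (by rw [orderOf_natCast_zmod_prime_pow hp2 hg (by have := hj.1; omega),
        Nat.card_eq_fintype_card, ZMod.card_units_eq_totient]) hy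
    obtain ⟨i, hi, hib⟩ := exists_add_mod_eq (b := b) (Nat.mod_lt n (hd j))
    refine ⟨j, hj, i, hi, _, ?_, rfl⟩
    rw [hib]
    exact (pow_mem_cyclotomicClass_iff (hord hj) he (Nat.mod_lt n (hd j)) n).mpr rfl
  · rintro ⟨y, hy, h0⟩
    exact levelEmbed_ne_zero (by have := hj.1; omega) hj.2
      (isUnit_of_mem_cyclotomicClass (hord hj) (hd j) hy) h0
  · obtain ⟨y, hy, rfl⟩ := hx
    obtain ⟨y', hy', hyy'⟩ := hx'
    obtain rfl := eq_of_levelEmbed_eq (by have := hj.1; omega) hj.2 (by have := hj'.1; omega)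
      hj'.2 (isUnit_of_mem_cyclotomicClass (hord hj) (hd j) hy)
      (isUnit_of_mem_cyclotomicClass (hord hj') (hd j') hy') hyy'.symm
    obtain rfl := levelEmbed_injective hj.2 hyy'
    exact ⟨rfl, eq_of_add_mod_eq hi hi' (eq_of_mem_cyclotomicClass (hord hj) he
      (Nat.mod_lt _ (hd j)) (Nat.mod_lt _ (hd j)) hy hy')⟩
  · rw [ncard_image_of_injective _ (levelEmbed_injective hj.2)]
    exact ncard_cyclotomicClass (hord hj) (hd j)

end Cyclotomy

theorem C1set_card_and_partition_general
    (p : ℕ) (hp : p.Prime) (hodd : Odd p)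
    (e : ℕ) (he : 0 < e) (hef : e ∣ p - 1) (hfeven : Even ((p - 1) / e))
    (g : ℕ) (hg : orderOf (g : ZMod (p ^ 2)) = Nat.totient (p ^ 2))
    (m : ℕ) (b : ℕ) :
    (C1set p e g m b).ncard = (p ^ m + 1) / 2 ∧
    C0set p e g m b ∪ C1set p e g m b = Set.univ ∧
    Disjoint (C0set p e g m b) (C1set p e g m b) := by
  have := Fact.mk hp
  have h := isBlockPartition_levelEmbed_Dclass (hodd.ne_two_of_dvd_nat dvd_rfl) he hef hg m b
  refine ⟨?_, h.union_eq_univ, h.disjoint⟩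
  exact (h.ncard_lowerHalf (finite_Icc 1 m) fun j _ => hfeven.mul_left _).trans
    (by rw [Nat.card_zmod])

/-- if `f = (p-1)/e` is even, then for every `m ≥ 1` and every `b`,
`|C₁^(p^m)| = (p^m + 1)/2` and `ℤ/p^mℤ` is the disjoint union of `C₀^(p^m)` and
`C₁^(p^m)`. -/
theorem C1set_card_and_partition
    (p : ℕ) (hp : p.Prime) (hodd : Odd p)
    (e : ℕ) (he : 0 < e) (hef : e ∣ p - 1) (hfeven : Even ((p - 1) / e))
    (g : ℕ) (hg : orderOf (g : ZMod (p ^ 2)) = Nat.totient (p ^ 2))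
    (m : ℕ) (hm : 1 ≤ m) (b : ℕ) :
    (C1set p e g m b).ncard = (p ^ m + 1) / 2 ∧
    C0set p e g m b ∪ C1set p e g m b = Set.univ ∧
    Disjoint (C0set p e g m b) (C1set p e g m b) :=
  C1set_card_and_partition_general p hp hodd e he hef hfeven g hg m b
end

section
/- Let 1 ≤ j ≤ n and let a be an integer whose residue modulo p^j lies in D_k^(p^j). Then for every index i and every integer l with 0 ≤ l < j, E_i^(p^j)(α_j^(p^l·a)) = E_((i+k) mod d_(j−l))^(p^(j−l))(α_(j−l)), and for every l ≥ j, E_i^(p^j)(α_j^(p^l·a)) equals e mod 2 (as an element of F₂ ⊆ ᾱ). -/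
open Finset

/-- `E_l^(p^j)(x) = Σ_{i ∈ D_l^(p^j)} x^i`, exponents being the integer
representatives `g^(d_j·t + l) mod p^j ∈ [0, p^j)` of the elements of `D_l^(p^j)`. -/
noncomputable def Epoly (p e g j l : ℕ) (x : AlgebraicClosure (ZMod 2)) :
    AlgebraicClosure (ZMod 2) :=
  ∑ t ∈ Finset.range e, x ^ (g ^ (p ^ (j - 1) * ((p - 1) / e) * t + l) % p ^ j)

/-- `H_k^(p^j)(x) = Σ_{i=0}^{d_j/2-1} E_((i+k) mod d_j)^(p^j)(x)`. -/
noncomputable def Hpoly (p e g j k : ℕ) (x : AlgebraicClosure (ZMod 2)) :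
    AlgebraicClosure (ZMod 2) :=
  ∑ i ∈ Finset.range (p ^ (j - 1) * ((p - 1) / e) / 2),
    Epoly p e g j ((i + k) % (p ^ (j - 1) * ((p - 1) / e))) x

/-- `T_k^(p^j)(x) = H_k^(p^j)(x) + H_k^(p^(j-1))(x^p) + ⋯ + H_k^(p)(x^(p^(j-1)))`. -/
noncomputable def Tpoly (p e g j k : ℕ) (x : AlgebraicClosure (ZMod 2)) :
    AlgebraicClosure (ZMod 2) :=
  ∑ l ∈ Finset.range j, Hpoly p e g (j - l) k (x ^ p ^ l)

theorem Function.Periodic.sum_range_mul_add {M : Type*} [AddCommMonoid M] {f : ℕ → M} {e : ℕ}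
    (hf : Function.Periodic f e) {w : ℕ} (hw : w.Coprime e) (c : ℕ) :
    ∑ t ∈ range e, f (w * t + c) = ∑ t ∈ range e, f t := by
  rcases e.eq_zero_or_pos with rfl | he
  · simp
  have hmaps : Set.MapsTo (fun t => (w * t + c) % e) (range e : Set ℕ) (range e) :=
    fun t _ => mem_range.2 (Nat.mod_lt _ he)
  have hinj : Set.InjOn (fun t => (w * t + c) % e) (range e : Set ℕ) := by
    intro t₁ ht₁ t₂ ht₂ h
    have hmul : w * t₁ ≡ w * t₂ [MOD e] := Nat.ModEq.add_right_cancel' c h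
    exact (hmul.cancel_left_of_coprime hw.symm).eq_of_lt_of_lt (mem_range.1 ht₁) (mem_range.1 ht₂)
  exact sum_nbij _ hmaps hinj (surjOn_of_injOn_of_card_le _ hmaps hinj le_rfl)
    fun t _ => (hf.map_mod_nat _).symm

theorem pow_pow_eq_pow_pow_of_modEq {M : Type*} [Monoid M] {γ : M} {P N g u v : ℕ}
    (hγ : γ ^ P = 1) (hg : g ^ N ≡ 1 [MOD P]) (huv : u ≡ v [MOD N]) :
    γ ^ g ^ u = γ ^ g ^ v := by
  refine pow_eq_pow_of_modEq ?_ hγ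
  have hgN : (g : ZMod P) ^ N = 1 := by exact_mod_cast (ZMod.natCast_eq_natCast_iff _ _ _).2 hg
  exact (ZMod.natCast_eq_natCast_iff _ _ _).1 (by push_cast; exact pow_eq_pow_of_modEq huv hgN)

theorem Nat.Coprime.of_orderOf_eq_totient {g n : ℕ} (hn : 0 < n)
    (hg : orderOf (g : ZMod n) = n.totient) : g.Coprime n := by
  rw [← ZMod.isUnit_iff_coprime]
  exact (orderOf_pos_iff.1 (hg ▸ Nat.totient_pos.2 hn)).isUnit

section Epoly

variable {p e g : ℕ}

theorem Epoly_one (j i : ℕ) : Epoly p e g j i 1 = e := by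
  simp [Epoly]

theorem Epoly_eq_sum_of_pow_eq_one {j i : ℕ} {γ : AlgebraicClosure (ZMod 2)}
    (hγ : γ ^ p ^ j = 1) :
    Epoly p e g j i γ = ∑ t ∈ range e, γ ^ g ^ (p ^ (j - 1) * ((p - 1) / e) * t + i) :=
  sum_congr rfl fun _ _ => pow_eq_pow_of_modEq (Nat.mod_modEq _ _) hγ

theorem totient_prime_pow_eq_mul_div (hp : p.Prime) (hef : e ∣ p - 1) {m : ℕ} (hm : 0 < m) :
    (p ^ m).totient = e * (p ^ (m - 1) * ((p - 1) / e)) := by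
  rw [Nat.totient_prime_pow hp hm, mul_left_comm, Nat.mul_div_cancel' hef]

theorem Epoly_pow_eq (hp : p.Prime) (hef : e ∣ p - 1) (hgp : g.Coprime p)
    {m : ℕ} (hm : 0 < m) (l : ℕ) {γ : AlgebraicClosure (ZMod 2)} (hγ : γ ^ p ^ m = 1)
    {a s k : ℕ} (ha : a ≡ g ^ (p ^ (m + l - 1) * ((p - 1) / e) * s + k) [MOD p ^ m]) (i : ℕ) :
    Epoly p e g (m + l) i (γ ^ a) = Epoly p e g m ((i + k) % (p ^ (m - 1) * ((p - 1) / e))) γ := by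
  set d := p ^ (m - 1) * ((p - 1) / e)
  have hpe : p.Coprime e :=
    ((Nat.coprime_self_sub_right hp.one_lt.le).2 (Nat.coprime_one_right p)).coprime_dvd_right hef
  have hdj : p ^ (m + l - 1) * ((p - 1) / e) = d * p ^ l := by
    rw [show m + l - 1 = m - 1 + l by omega, pow_add]; ring
  have hq : d * ((i + k) / d) + (i + k) % d = i + k := Nat.div_add_mod _ _
  have heuler : g ^ (e * d) ≡ 1 [MOD p ^ m] :=
    totient_prime_pow_eq_mul_div hp hef hm ▸ Nat.ModEq.pow_totient (hgp.pow_right m)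
  have hperiodic : Function.Periodic (fun t => γ ^ g ^ (d * t + (i + k) % d)) e := fun t =>
    pow_pow_eq_pow_pow_of_modEq hγ heuler <| by
      rw [show d * (t + e) + (i + k) % d = d * t + (i + k) % d + e * d by ring]
      exact Nat.add_mod_right _ _
  have hγa : (γ ^ a) ^ p ^ (m + l) = 1 := by
    rw [← pow_mul, mul_comm, pow_mul, pow_add, pow_mul, hγ, one_pow, one_pow]
  calc Epoly p e g (m + l) i (γ ^ a)
      = ∑ t ∈ range e, (γ ^ a) ^ g ^ (d * p ^ l * t + i) := by
        rw [Epoly_eq_sum_of_pow_eq_one hγa, hdj]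
    _ = ∑ t ∈ range e, γ ^ g ^ (d * (p ^ l * t + (p ^ l * s + (i + k) / d)) + (i + k) % d) := by
        refine sum_congr rfl fun t _ => ?_
        rw [← pow_mul, pow_eq_pow_of_modEq (ha.mul_right _) hγ, ← pow_add, hdj]
        congr 2
        linarith [hq]
    _ = ∑ t ∈ range e, γ ^ g ^ (d * t + (i + k) % d) :=
        hperiodic.sum_range_mul_add (hpe.pow_left l) _
    _ = Epoly p e g m ((i + k) % d) γ := (Epoly_eq_sum_of_pow_eq_one hγ).symm

end Epoly

theorem Epoly_eval_general
    (p : ℕ) (hp : p.Prime)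
    (e : ℕ) (hef : e ∣ p - 1)
    (g : ℕ) (hg : orderOf (g : ZMod (p ^ 2)) = Nat.totient (p ^ 2))
    (n j : ℕ) (hjn : j ≤ n)
    (α : AlgebraicClosure (ZMod 2)) (hα : IsPrimitiveRoot α (p ^ n))
    (k a : ℕ) (ha : ((a : ZMod (p ^ j)) ∈ Dclass p e g j k)) :
    (∀ l < j, ∀ i : ℕ,
        Epoly p e g j i ((α ^ p ^ (n - j)) ^ (p ^ l * a))
          = Epoly p e g (j - l) ((i + k) % (p ^ (j - l - 1) * ((p - 1) / e)))
              (α ^ p ^ (n - (j - l)))) ∧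
    (∀ l, j ≤ l → ∀ i : ℕ,
        Epoly p e g j i ((α ^ p ^ (n - j)) ^ (p ^ l * a))
          = algebraMap (ZMod 2) (AlgebraicClosure (ZMod 2)) (e : ZMod 2)) := by
  obtain ⟨s, -, hs⟩ := ha
  have hgp : g.Coprime p :=
    (Nat.Coprime.of_orderOf_eq_totient (by positivity [hp.pos]) hg).coprime_dvd_right
      (dvd_pow_self p two_ne_zero)
  have hαpow : ∀ l, (α ^ p ^ (n - j)) ^ (p ^ l * a) = (α ^ p ^ (n - j + l)) ^ a := fun l => by
    rw [← pow_mul, ← mul_assoc, ← pow_add, pow_mul]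
  refine ⟨fun l hl i => ?_, fun l hl i => ?_⟩
  · obtain ⟨m, rfl⟩ : ∃ m, j = m + l := ⟨j - l, by omega⟩
    have hγ : (α ^ p ^ (n - m)) ^ p ^ m = 1 := by
      rw [← pow_mul, ← pow_add, Nat.sub_add_cancel (by omega), hα.pow_eq_one]
    have ham : a ≡ g ^ (p ^ (m + l - 1) * ((p - 1) / e) * s + k) [MOD p ^ m] :=
      ((ZMod.natCast_eq_natCast_iff _ _ _).1 (by push_cast; exact hs)).of_dvd
        (pow_dvd_pow p (Nat.le_add_right m l))
    rw [hαpow, show n - (m + l) + l = n - m by omega, Nat.add_sub_cancel]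
    exact Epoly_pow_eq hp hef hgp (by omega) l hγ ham i
  · rw [hαpow, show n - j + l = n + (l - j) by omega, pow_add, pow_mul, hα.pow_eq_one, one_pow,
      one_pow, Epoly_one, map_natCast]

/-- for `1 ≤ j ≤ n` and `a` whose residue mod `p^j` lies in `D_k^(p^j)`:
for `0 ≤ l < j`, `E_i^(p^j)(α_j^(p^l·a)) = E_((i+k) mod d_(j-l))^(p^(j-l))(α_(j-l))`,
and for `l ≥ j`, `E_i^(p^j)(α_j^(p^l·a)) = e mod 2` in `F₂ ⊆ ᾱ`.
Here `α_j = α_n^(p^(n-j))`. -/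
theorem Epoly_eval
    (p : ℕ) (hp : p.Prime) (hodd : Odd p)
    (e r : ℕ) (he : 0 < e) (hef : e ∣ p - 1) (hr : 1 ≤ r) (hf : (p - 1) / e = 2 ^ r)
    (g : ℕ) (hg : orderOf (g : ZMod (p ^ 2)) = Nat.totient (p ^ 2))
    (n j : ℕ) (hj : 1 ≤ j) (hjn : j ≤ n)
    (α : AlgebraicClosure (ZMod 2)) (hα : IsPrimitiveRoot α (p ^ n))
    (k a : ℕ) (ha : ((a : ZMod (p ^ j)) ∈ Dclass p e g j k)) :
    (∀ l < j, ∀ i : ℕ,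
        Epoly p e g j i ((α ^ p ^ (n - j)) ^ (p ^ l * a))
          = Epoly p e g (j - l) ((i + k) % (p ^ (j - l - 1) * ((p - 1) / e)))
              (α ^ p ^ (n - (j - l)))) ∧
    (∀ l, j ≤ l → ∀ i : ℕ,
        Epoly p e g j i ((α ^ p ^ (n - j)) ^ (p ^ l * a))
          = algebraMap (ZMod 2) (AlgebraicClosure (ZMod 2)) (e : ZMod 2)) :=
  Epoly_eval_general p hp e hef g hg n j hjn α hα k a ha
end
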